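/- For |z| < π/2, z·tan z = Σ_{n≥1} (-1)^n 4^n (1 - 4^n) B_{2n} z^{2n}/(2n)!, where B_k are the Bernoulli numbers. -/

import Mathlib

/-!
The Bernoulli generating function `β w = ∑ Bₙ wⁿ / n!` satisfies `β w * (eʷ - 1) = w` for
`‖w‖ < 2π`, the radius being controlled by `|B₂ₖ| = 2 (2k)! ζ(2k) / (2π)^(2k)`. Hence
`β w - β (2w) = w / (eʷ + 1)`, and with `w = 2iz` this is `z tan z + iz`. In the series for
`β w - β (2w)` the term `n = 1` is `iz`, the other odd terms vanish, and the even ones are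
`B₂ₖ (1 - 4^k) (2iz)^(2k) / (2k)! = (-4)^k (1 - 4^k) B₂ₖ z^(2k) / (2k)!`.
-/

open Real
open scoped Nat

lemma abs_bernoulli_two_mul_mul_two_pi_pow_le {k : ℕ} (hk : k ≠ 0) :
    |(bernoulli (2 * k) : ℝ)| * (2 * π) ^ (2 * k) ≤ 4 * (2 * k)! := by
  have hζ := hasSum_zeta_nat hk
  set ζ := (-1 : ℝ) ^ (k + 1) * 2 ^ (2 * k - 1) * π ^ (2 * k) * bernoulli (2 * k) / (2 * k)!
  have hζ_nonneg : 0 ≤ ζ := hζ.nonneg fun n => by positivity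
  have hζ_le : ζ ≤ π ^ 2 / 6 := hasSum_le (fun n => ?_) hζ hasSum_zeta_two
  · -- `ζ = ζ(2k) ≤ ζ(2) = π² / 6 < 2`
    have hfac : (0 : ℝ) < (2 * k)! := by positivity
    have hpow : (2 : ℝ) ^ (2 * k - 1) * 2 = 2 ^ (2 * k) := pow_sub_one_mul (by omega) 2
    have habs : |(bernoulli (2 * k) : ℝ)| * (2 * π) ^ (2 * k) = 2 * (2 * k)! * |ζ| := by
      simp only [ζ, abs_div, abs_mul, abs_pow, abs_neg, abs_one, one_pow, abs_two,
        abs_of_pos pi_pos, Nat.abs_cast, ← hpow, mul_pow]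
      field_simp
    have hζ_le_two : ζ ≤ 2 := hζ_le.trans (by nlinarith [pi_lt_d2, pi_pos])
    rw [habs, abs_of_nonneg hζ_nonneg]
    nlinarith
  · rcases Nat.eq_zero_or_pos n with rfl | hn
    · simp [hk]
    · exact one_div_pow_le_one_div_pow_of_le (by exact_mod_cast hn) (by omega)

lemma abs_bernoulli_mul_two_pi_pow_le (n : ℕ) :
    |(bernoulli n : ℝ)| * (2 * π) ^ n ≤ 4 * n ! := by
  obtain ⟨k, rfl | rfl⟩ := Nat.even_or_odd' n
  · rcases eq_or_ne k 0 with rfl | hk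
    · norm_num
    · exact abs_bernoulli_two_mul_mul_two_pi_pow_le hk
  · rcases eq_or_ne k 0 with rfl | hk
    · norm_num
      linarith [pi_lt_d2]
    · rw [bernoulli_eq_zero_of_odd (odd_two_mul_add_one k) (by omega)]
      simp

lemma summable_norm_bernoulli_mul_pow_div_factorial {w : ℂ} (hw : ‖w‖ < 2 * π) :
    Summable fun n => ‖(bernoulli n : ℂ) * w ^ n / (n ! : ℂ)‖ := by
  have hq : ‖w‖ / (2 * π) < 1 := (div_lt_one (by positivity)).2 hw
  refine .of_nonneg_of_le (fun n => norm_nonneg _) (fun n => ?_)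
    ((summable_geometric_of_lt_one (by positivity) hq).mul_left 4)
  have h2π : (0 : ℝ) < (2 * π) ^ n := by positivity
  rw [norm_div, norm_mul, norm_pow, Complex.norm_ratCast, Complex.norm_natCast, div_pow,
    ← mul_div_assoc, div_le_div_iff₀ (by positivity) h2π]
  calc |(bernoulli n : ℝ)| * ‖w‖ ^ n * (2 * π) ^ n
      = |(bernoulli n : ℝ)| * (2 * π) ^ n * ‖w‖ ^ n := by ring
    _ ≤ 4 * n ! * ‖w‖ ^ n :=
      mul_le_mul_of_nonneg_right (abs_bernoulli_mul_two_pi_pow_le n) (by positivity)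
    _ = 4 * ‖w‖ ^ n * n ! := by ring

namespace PowerSeries

theorem tsum_coeff_mul_pow_mul_tsum {R : Type*} [NormedCommRing R] [CompleteSpace R]
    {f g : R⟦X⟧} {w : R} (hf : Summable fun n => ‖coeff n f * w ^ n‖)
    (hg : Summable fun n => ‖coeff n g * w ^ n‖) :
    (∑' n, coeff n f * w ^ n) * ∑' n, coeff n g * w ^ n = ∑' n, coeff n (f * g) * w ^ n := by
  rw [tsum_mul_tsum_eq_tsum_sum_antidiagonal_of_summable_norm hf hg]
  congr 1 with n
  rw [coeff_mul, Finset.sum_mul]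
  refine Finset.sum_congr rfl fun p hp => ?_
  rw [← Finset.HasAntidiagonal.mem_antidiagonal.mp hp, pow_add]
  ring

end PowerSeries

open PowerSeries in
lemma hasSum_coeff_exp_sub_one_mul_pow (w : ℂ) :
    HasSum (fun n => coeff n (exp ℂ - 1) * w ^ n) (Complex.exp w - 1) := by
  have hexp := NormedSpace.expSeries_div_hasSum_exp w
  rw [← Complex.exp_eq_exp_ℂ] at hexp
  have hcoeff : (fun n => coeff n (exp ℂ - 1) * w ^ n) =
      fun n => w ^ n / (n ! : ℂ) - if n = 0 then 1 else 0 := by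
    funext n
    rcases eq_or_ne n 0 with rfl | hn
    · simp
    · simp [hn, coeff_one, div_eq_inv_mul]
  rw [hcoeff]
  exact hexp.sub (hasSum_ite_eq 0 1)

open PowerSeries in
lemma bernoulli_tsum_mul_exp_sub_one {w : ℂ} (hw : ‖w‖ < 2 * π) :
    (∑' n, (bernoulli n : ℂ) * w ^ n / (n ! : ℂ)) * (Complex.exp w - 1) = w := by
  have hB : ∀ n,
      coeff n (bernoulliPowerSeries ℂ) * w ^ n = (bernoulli n : ℂ) * w ^ n / n ! := by
    intro n
    simp only [bernoulliPowerSeries, map_div₀, eq_ratCast, map_natCast, coeff_mk]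
    ring
  have hE : Summable fun n => ‖coeff n (exp ℂ - 1) * w ^ n‖ := by
    refine .of_nonneg_of_le (fun n => norm_nonneg _) (fun n => ?_)
      (Real.summable_pow_div_factorial ‖w‖)
    rcases eq_or_ne n 0 with rfl | hn
    · simp
    · simp [hn, coeff_one, div_eq_inv_mul]
  have hB' : Summable fun n => ‖coeff n (bernoulliPowerSeries ℂ) * w ^ n‖ := by
    simpa only [hB] using summable_norm_bernoulli_mul_pow_div_factorial hw
  rw [← (hasSum_coeff_exp_sub_one_mul_pow w).tsum_eq, ← funext hB,
    tsum_coeff_mul_pow_mul_tsum hB' hE, bernoulliPowerSeries_mul_exp_sub_one]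
  simp [coeff_X]

namespace Complex

lemma exp_add_one_ne_zero_of_norm_lt_pi {w : ℂ} (hw : ‖w‖ < π) : exp w + 1 ≠ 0 := by
  intro h
  have hexp : exp (2 * w) = 1 := by
    rw [two_mul, exp_add, eq_neg_of_add_eq_zero_left h]; ring
  obtain ⟨n, hn⟩ := exp_eq_one_iff.mp hexp
  have hnorm : ‖w‖ = |(n : ℝ)| * π := by
    rw [show w = n * π * I by linear_combination hn / 2]
    simp [abs_of_pos pi_pos]
  rcases eq_or_ne n 0 with rfl | hn0
  · simp_all
  · have : (1 : ℝ) ≤ |(n : ℝ)| := by exact_mod_cast Int.one_le_abs hn0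
    nlinarith [pi_pos]

-- At the poles of `tan` both sides take the junk value `0`.
theorem tan_eq_I_mul_one_sub_exp_div (z : ℂ) :
    tan z = I * (1 - exp (2 * I * z)) / (1 + exp (2 * I * z)) := by
  have he : exp (-z * I) * exp (2 * I * z) = exp (z * I) := by rw [← exp_add]; ring_nf
  have hsin : sin z = exp (-z * I) * (I * (1 - exp (2 * I * z))) / 2 := by
    rw [sin]; linear_combination (I / 2) * he
  have hcos : cos z = exp (-z * I) * (1 + exp (2 * I * z)) / 2 := by
    rw [cos]; linear_combination (-1 / 2) * he
  rw [tan_eq_sin_div_cos, hsin, hcos, div_div_div_cancel_right₀ two_ne_zero,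
    mul_div_mul_left _ _ (exp_ne_zero _)]

end Complex

lemma hasSum_bernoulli_mul_one_sub_two_pow {w : ℂ} (hw : ‖w‖ < π) :
    HasSum (fun n => (bernoulli n : ℂ) * ((1 - 2 ^ n) * w ^ n / n !))
      (w / (Complex.exp w + 1)) := by
  rcases eq_or_ne w 0 with rfl | hw0
  · have hzero : (fun n => (bernoulli n : ℂ) * ((1 - 2 ^ n) * (0 : ℂ) ^ n / n !)) = 0 := by
      funext n
      rcases n with _ | n <;> simp
    rw [hzero, zero_div]
    exact hasSum_zero
  have hw₁ : ‖w‖ < 2 * π := by linarith [pi_pos]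
  have hw₂ : ‖2 * w‖ < 2 * π := by rw [norm_mul, Complex.norm_two]; linarith
  have h₁ := bernoulli_tsum_mul_exp_sub_one hw₁
  have h₂ := bernoulli_tsum_mul_exp_sub_one hw₂
  rw [two_mul w, Complex.exp_add, ← two_mul w] at h₂
  set u := Complex.exp w
  have hsub : u - 1 ≠ 0 := right_ne_zero_of_mul (h₁ ▸ hw0)
  have hadd : u + 1 ≠ 0 := Complex.exp_add_one_ne_zero_of_norm_lt_pi hw
  have hterm : (fun n => (bernoulli n : ℂ) * ((1 - 2 ^ n) * w ^ n / n !)) =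
      fun n => (bernoulli n : ℂ) * w ^ n / (n ! : ℂ) -
        (bernoulli n : ℂ) * (2 * w) ^ n / n ! := by
    funext n; rw [mul_pow]; ring
  -- `w / (u - 1) - 2w / (u² - 1) = w / (u + 1)`
  have hval : w / (u + 1) = (∑' n, (bernoulli n : ℂ) * w ^ n / n !) -
      ∑' n, (bernoulli n : ℂ) * (2 * w) ^ n / n ! := by
    rw [div_eq_iff hadd]
    refine mul_right_cancel₀ hsub ?_
    linear_combination h₂ - (u + 1) * h₁
  rw [hterm, hval]
  exact (summable_norm_bernoulli_mul_pow_div_factorial hw₁).of_norm.hasSum.sub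
    (summable_norm_bernoulli_mul_pow_div_factorial hw₂).of_norm.hasSum

lemma hasSum_bernoulli_two_mul_succ_mul {K : Type*} [Field K] [CharZero K] [TopologicalSpace K]
    [IsTopologicalAddGroup K] {a : ℕ → K} {s : K}
    (h : HasSum (fun n => (bernoulli n : K) * a n) s) (h0 : a 0 = 0) :
    HasSum (fun k => (bernoulli (2 * (k + 1)) : K) * a (2 * (k + 1))) (s + a 1 / 2) := by
  have hinj : Function.Injective fun k : ℕ => 2 * (k + 1) := fun m n hmn => by
    simp only at hmn; omega
  have hvanish : ∀ m ∉ Set.range fun k : ℕ => 2 * (k + 1),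
      Function.update (fun n => (bernoulli n : K) * a n) 1 0 m = 0 := by
    intro m hm
    rcases eq_or_ne m 1 with rfl | hm1
    · simp
    rw [Function.update_of_ne hm1]
    obtain ⟨k, rfl | rfl⟩ := Nat.even_or_odd' m
    · obtain rfl : k = 0 := by by_contra hk; exact hm ⟨k - 1, by simp only; omega⟩
      simp [h0]
    · simp [bernoulli_eq_zero_of_odd (odd_two_mul_add_one k) (by omega)]
  have hupd := (hinj.hasSum_iff hvanish).2 (h.update 1 0)
  rw [bernoulli_one] at hupd
  convert hupd using 1
  · funext k
    simp
  · push_cast; ring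

theorem stmt_8 (z : ℂ) (hz : ‖z‖ < π / 2) :
    z * Complex.tan z = ∑' n : ℕ,
      (-1) ^ (n + 1) * 4 ^ (n + 1) * (1 - 4 ^ (n + 1)) * (bernoulli (2 * (n + 1)) : ℂ) *
        z ^ (2 * (n + 1)) / (Nat.factorial (2 * (n + 1)) : ℂ) := by
  set w := 2 * Complex.I * z with hw_def
  have hw : ‖w‖ < π := by
    rw [hw_def, norm_mul, norm_mul, Complex.norm_I, Complex.norm_two]; linarith
  have htan : z * Complex.tan z = w / (Complex.exp w + 1) + -w / 2 := by
    rw [Complex.tan_eq_I_mul_one_sub_exp_div, ← hw_def]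
    field_simp [add_comm (1 : ℂ), Complex.exp_add_one_ne_zero_of_norm_lt_pi hw]
    ring
  have hsum := hasSum_bernoulli_two_mul_succ_mul (hasSum_bernoulli_mul_one_sub_two_pow hw)
    (by simp)
  rw [show ((1 : ℂ) - 2 ^ 1) * w ^ 1 / (1 ! : ℂ) / 2 = -w / 2 by norm_num, ← htan] at hsum
  refine (hsum.congr_fun fun n => ?_).tsum_eq.symm
  simp only [hw_def, mul_pow, pow_mul, Complex.I_sq]
  ring
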